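/- Suppose f : ℝ^{2d} → ℂ satisfies: for every λ > 0 there is C_λ with |f(z)| ≤ C_λ e^{λ⟨z⟩}, and there exist ε, δ > 0 with |f(z)| ≤ C e^{−ε⟨z⟩} for z ∈ Γ_δ. Suppose further |F(w)| ≤ ∫ e^{−ε'|w−χ(z)|} |f(z)| dz with ε' > 0 and χ : ℝ^{2d} → ℝ^{2d} bi-Lipschitz and measure-preserving. Then there exist η > 0, δ' > 0 and C'' such that |F(w)| ≤ C'' e^{−η⟨w⟩} for all w ∈ χ(Γ)_{δ'}. -/

import Mathlib

open Real MeasureTheory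

/-- Japanese bracket. -/
noncomputable def jb {n : ℕ} (z : EuclideanSpace ℝ (Fin n)) : ℝ :=
  Real.sqrt (1 + ‖z‖ ^ 2)

/-- The `δ`-neighborhood of a set `Γ ⊆ ℝ^n`. -/
def nbhd {n : ℕ} (Γ : Set (EuclideanSpace ℝ (Fin n))) (δ : ℝ) :
    Set (EuclideanSpace ℝ (Fin n)) :=
  {z | ∃ z₀ ∈ Γ, ‖z - z₀‖ < δ * jb z₀}

/-!
Fix `z₀ ∈ Γ` and `w` close to `χ z₀` on the scale `⟨χ z₀⟩`, and bound the integrand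
`e^{-ε'|w - χ z|} |f z|` pointwise by `D e^{-η⟨w⟩} e^{-c⟨z⟩}`. If `z ∈ Γ_δ`, the decay of `f`
does it, since `⟨w⟩ ≤ M⟨z⟩ + |w - χ z|` for a Lipschitz `χ`. If `z ∉ Γ_δ`, then
`|z - z₀| ≥ δ⟨z₀⟩`, and as `χ⁻¹` is Lipschitz, `|w - χ z| ≳ ⟨z₀⟩`; this makes `⟨w⟩` and `⟨z⟩`
both `≲ |w - χ z|`, so the kernel absorbs the subexponential growth `e^{λ⟨z⟩}` of `f` for
small `λ`. Integrating `e^{-c⟨z⟩}` then gives the claim.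
-/

open Module

lemma exp_neg_le_factorial_div_pow {s : ℝ} (hs : 0 < s) (N : ℕ) :
    exp (-s) ≤ N.factorial / s ^ N := by
  rw [exp_neg, inv_le_comm₀ (exp_pos _) (by positivity), inv_div]
  exact pow_div_factorial_le_exp s hs.le N

lemma exp_mul_le_of_le_mul_exp {a C r s t : ℝ} (ha : 0 ≤ a) (h : a ≤ C * exp s)
    (hrst : r + s ≤ t) : exp r * a ≤ C * exp t := by
  have hC : 0 ≤ C := nonneg_of_mul_nonneg_left (ha.trans h) (exp_pos s)
  calc exp r * a ≤ exp r * (C * exp s) := by gcongr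
    _ = C * exp (r + s) := by rw [exp_add]; ring
    _ ≤ C * exp t := by gcongr

section Integrability

variable {E : Type*} [NormedAddCommGroup E] [NormedSpace ℝ E] [FiniteDimensional ℝ E]
  [MeasurableSpace E] [BorelSpace E] {μ : Measure E} [μ.IsAddHaarMeasure]

lemma integrable_exp_neg_mul_norm {c : ℝ} (hc : 0 < c) :
    Integrable (fun x : E ↦ exp (-c * ‖x‖)) μ := by
  set N := finrank ℝ E + 1
  have hN : (finrank ℝ E : ℝ) < N := by exact_mod_cast Nat.lt_succ_self _
  refine ((integrable_one_add_norm hN).const_mul (exp c * N.factorial / c ^ N)).mono'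
    (by fun_prop) (ae_of_all _ fun x ↦ ?_)
  rw [norm_of_nonneg (exp_pos _).le, rpow_neg (by positivity), rpow_natCast]
  calc exp (-c * ‖x‖) = exp c * exp (-(c * (1 + ‖x‖))) := by rw [← exp_add]; ring_nf
    _ ≤ exp c * (N.factorial / (c * (1 + ‖x‖)) ^ N) := by
        gcongr; exact exp_neg_le_factorial_div_pow (by positivity) N
    _ = exp c * N.factorial / c ^ N * ((1 + ‖x‖) ^ N)⁻¹ := by
        rw [mul_pow]; field_simp

end Integrability

section JapaneseBracket

variable {n : ℕ}

lemma one_le_jb (z : EuclideanSpace ℝ (Fin n)) : 1 ≤ jb z :=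
  Real.le_sqrt_of_sq_le (by nlinarith [sq_nonneg ‖z‖])

lemma norm_le_jb (z : EuclideanSpace ℝ (Fin n)) : ‖z‖ ≤ jb z :=
  Real.le_sqrt_of_sq_le (by linarith)

@[fun_prop]
lemma continuous_jb : Continuous (jb : EuclideanSpace ℝ (Fin n) → ℝ) := by
  unfold jb; fun_prop

lemma jb_le_jb_add_norm_sub (z w : EuclideanSpace ℝ (Fin n)) : jb w ≤ jb z + ‖w - z‖ := by
  have htri : ‖w‖ ≤ ‖z‖ + ‖w - z‖ := norm_le_norm_add_norm_sub' w z
  have hsq : jb z ^ 2 = 1 + ‖z‖ ^ 2 := Real.sq_sqrt (by positivity)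
  refine Real.sqrt_le_iff.2 ⟨by linarith [one_le_jb z, norm_nonneg (w - z)], ?_⟩
  nlinarith [mul_le_mul htri htri (norm_nonneg w) (by positivity),
    mul_le_mul_of_nonneg_right (norm_le_jb z) (norm_nonneg (w - z))]

lemma LipschitzWith.jb_apply_le {K : NNReal}
    {g : EuclideanSpace ℝ (Fin n) → EuclideanSpace ℝ (Fin n)} (hg : LipschitzWith K g)
    (z : EuclideanSpace ℝ (Fin n)) : jb (g z) ≤ (jb (g 0) + K) * jb z := by
  have h₁ := jb_le_jb_add_norm_sub (g 0) (g z)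
  have h₂ : ‖g z - g 0‖ ≤ K * ‖z‖ := by simpa using hg.norm_sub_le z 0
  nlinarith [mul_nonneg (zero_le_one.trans (one_le_jb (g 0))) (sub_nonneg.2 (one_le_jb z)),
    mul_nonneg K.coe_nonneg (sub_nonneg.2 (norm_le_jb z))]

lemma integrable_exp_neg_mul_jb {c : ℝ} (hc : 0 < c) :
    Integrable (fun z : EuclideanSpace ℝ (Fin n) ↦ exp (-c * jb z)) :=
  (integrable_exp_neg_mul_norm hc).mono' (by fun_prop)
    (ae_of_all _ fun z ↦ by
      rw [norm_of_nonneg (exp_pos _).le]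
      exact exp_le_exp.2 (by nlinarith [norm_le_jb z]))

lemma integral_le_mul_integral_exp_neg_jb {g : EuclideanSpace ℝ (Fin n) → ℝ} {A c : ℝ}
    (hc : 0 < c) (hg₀ : ∀ z, 0 ≤ g z) (hg : ∀ z, g z ≤ A * exp (-c * jb z)) :
    ∫ z, g z ≤ A * ∫ z : EuclideanSpace ℝ (Fin n), exp (-c * jb z) := by
  rw [← integral_const_mul]
  exact integral_mono_of_nonneg (ae_of_all _ hg₀)
    ((integrable_exp_neg_mul_jb hc).const_mul A) (ae_of_all _ hg)

lemma exists_jb_le_mul_norm_sub_of_far {K K' : NNReal}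
    {χ : EuclideanSpace ℝ (Fin n) → EuclideanSpace ℝ (Fin n)}
    (hχ : LipschitzWith K χ) (hχ' : AntilipschitzWith K' χ) {δ : ℝ} (hδ : 0 < δ) :
    ∃ δ' > 0, ∃ L > 0, ∀ z₀ z w, ‖w - χ z₀‖ < δ' * jb (χ z₀) → δ * jb z₀ ≤ ‖z - z₀‖ →
      jb w ≤ L * ‖w - χ z‖ ∧ jb z ≤ L * ‖w - χ z‖ := by
  set M := jb (χ 0) + K
  set A : ℝ := K' + 1
  have hM : 0 < M := by positivity [one_le_jb (χ 0)]
  have hA : 0 < A := by positivity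
  set B := 2 * A / δ
  refine ⟨δ / (2 * A * M), by positivity, B * (M + 1) + 2 * A + 1, by positivity, ?_⟩
  intro z₀ z w hw hsep
  set X := ‖w - χ z‖
  set ρ := jb z₀
  have hX : 0 ≤ X := norm_nonneg _
  have hχz₀ : jb (χ z₀) ≤ M * ρ := hχ.jb_apply_le z₀
  have hY : 2 * A * ‖w - χ z₀‖ ≤ δ * ρ :=
    calc 2 * A * ‖w - χ z₀‖ ≤ 2 * A * (δ / (2 * A * M) * (M * ρ)) := by
          gcongr; exact hw.le.trans (by gcongr)
      _ = δ * ρ := by field_simp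
  have hzz₀ : ‖z - z₀‖ ≤ A * (X + ‖w - χ z₀‖) := by
    calc ‖z - z₀‖ ≤ K' * ‖χ z - χ z₀‖ := by simpa [dist_eq_norm] using hχ'.le_mul_dist z z₀
      _ ≤ A * ‖χ z - χ z₀‖ := by gcongr; linarith
      _ ≤ A * (X + ‖w - χ z₀‖) := by
        gcongr; simpa [X, norm_sub_rev] using norm_sub_le_norm_sub_add_norm_sub (χ z) w (χ z₀)
  have hρ : δ * ρ ≤ 2 * A * X := by nlinarith
  have hYX : ‖w - χ z₀‖ ≤ X := by nlinarith
  have hρB : ρ ≤ B * X := by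
    rw [div_mul_eq_mul_div, le_div_iff₀ hδ]; linarith
  have hjw : jb w ≤ M * ρ + X := by linarith [jb_le_jb_add_norm_sub (χ z₀) w]
  have hjz : jb z ≤ ρ + 2 * A * X := by nlinarith [jb_le_jb_add_norm_sub z₀ z]
  have hB : 0 ≤ B := by positivity
  constructor <;> nlinarith [mul_le_mul_of_nonneg_left hρB hM.le, mul_nonneg hB hX]

lemma exists_integrand_le_mul_exp_neg_jb {V : Type*} [SeminormedAddCommGroup V] {K K' : NNReal}
    {χ : EuclideanSpace ℝ (Fin n) → EuclideanSpace ℝ (Fin n)}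
    (hχ : LipschitzWith K χ) (hχ' : AntilipschitzWith K' χ)
    {Γ : Set (EuclideanSpace ℝ (Fin n))} {f : EuclideanSpace ℝ (Fin n) → V}
    (hf₁ : ∀ lam : ℝ, 0 < lam → ∃ Clam : ℝ, ∀ z, ‖f z‖ ≤ Clam * exp (lam * jb z))
    {ε δ Cf ε' : ℝ} (hε : 0 < ε) (hδ : 0 < δ) (hε' : 0 < ε')
    (hf₂ : ∀ z ∈ nbhd Γ δ, ‖f z‖ ≤ Cf * exp (-ε * jb z)) :
    ∃ η > 0, ∃ δ' > 0, ∃ c > 0, ∃ D, ∀ z₀ ∈ Γ, ∀ w, ‖w - χ z₀‖ < δ' * jb (χ z₀) → ∀ z,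
      exp (-ε' * ‖w - χ z‖) * ‖f z‖ ≤ D * exp (-η * jb w) * exp (-c * jb z) := by
  obtain ⟨δ', hδ', L, hL, hfar⟩ := exists_jb_le_mul_norm_sub_of_far hχ hχ' hδ
  set M := jb (χ 0) + K
  have hM : 0 < M := by positivity [one_le_jb (χ 0)]
  -- `κ` is the growth rate of `f` that the kernel can absorb off `Γ_δ`
  set κ := ε' / (3 * L)
  have hκ : 0 < κ := by positivity
  obtain ⟨Cκ, hCκ⟩ := hf₁ κ hκ
  set η := min (min ε' (ε / (2 * M))) κ
  set c := min (ε / 2) κ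
  have hη : 0 < η := lt_min (lt_min hε' (by positivity)) hκ
  have hc : 0 < c := lt_min (by positivity) hκ
  refine ⟨η, hη, δ', hδ', c, hc, max Cf Cκ, fun z₀ hz₀ w hw z ↦ ?_⟩
  rw [mul_assoc, ← exp_add]
  set X := ‖w - χ z‖
  have hX : 0 ≤ X := norm_nonneg _
  have hjz₀ : 0 ≤ jb z := zero_le_one.trans (one_le_jb z)
  have hηκ : η ≤ κ := min_le_right _ _
  have hcκ : c ≤ κ := min_le_right _ _
  by_cases hz : z ∈ nbhd Γ δ
  · have hjw : jb w ≤ M * jb z + X := by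
      linarith [jb_le_jb_add_norm_sub (χ z) w, hχ.jb_apply_le z]
    have hηε' : η ≤ ε' := (min_le_left _ _).trans (min_le_left _ _)
    have hηM : η * M ≤ ε / 2 := by
      rw [← le_div_iff₀ hM, div_div]; exact (min_le_left _ _).trans (min_le_right _ _)
    have hcε : c ≤ ε / 2 := min_le_left _ _
    refine (exp_mul_le_of_le_mul_exp (norm_nonneg _) (hf₂ z hz) ?_).trans
      (by gcongr; exact le_max_left _ _)
    nlinarith [mul_le_mul_of_nonneg_left hjw hη.le, mul_le_mul_of_nonneg_right hηM hjz₀,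
      mul_le_mul_of_nonneg_right hηε' hX, mul_le_mul_of_nonneg_right hcε hjz₀]
  · have hsep : δ * jb z₀ ≤ ‖z - z₀‖ := not_lt.1 fun h ↦ hz ⟨z₀, hz₀, h⟩
    obtain ⟨hjw, hjz⟩ := hfar z₀ z w hw hsep
    have hκL : 3 * κ * L = ε' := by simp only [κ]; field_simp
    refine (exp_mul_le_of_le_mul_exp (norm_nonneg _) (hCκ z) ?_).trans
      (by gcongr; exact le_max_right _ _)
    have hLX : 0 ≤ L * X := by positivity
    nlinarith [mul_le_mul_of_nonneg_left hjw hη.le, mul_le_mul_of_nonneg_left hjz hc.le,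
      mul_le_mul_of_nonneg_left hjz hκ.le, mul_le_mul_of_nonneg_right hηκ hLX,
      mul_le_mul_of_nonneg_right hcκ hLX]

end JapaneseBracket

theorem propagation_of_regularity_general (d : ℕ)
    (χ ψ : EuclideanSpace ℝ (Fin (2 * d)) → EuclideanSpace ℝ (Fin (2 * d)))
    (K K' : NNReal) (hχ : LipschitzWith K χ) (hψ : LipschitzWith K' ψ)
    (hl : Function.LeftInverse ψ χ)
    (Γ : Set (EuclideanSpace ℝ (Fin (2 * d))))
    (f F : EuclideanSpace ℝ (Fin (2 * d)) → ℂ)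
    (hf1 : ∀ lam : ℝ, 0 < lam → ∃ Clam : ℝ, ∀ z,
      ‖f z‖ ≤ Clam * Real.exp (lam * jb z))
    (ε δ Cf : ℝ) (hε : 0 < ε) (hδ0 : 0 < δ)
    (hf2 : ∀ z ∈ nbhd Γ δ, ‖f z‖ ≤ Cf * Real.exp (-ε * jb z))
    (ε' : ℝ) (hε' : 0 < ε')
    (hF : ∀ w, ‖F w‖ ≤
      ∫ z, Real.exp (-ε' * ‖w - χ z‖) * ‖f z‖) :
    ∃ η > 0, ∃ δ' > 0, ∃ C'' : ℝ,
      ∀ w ∈ nbhd (χ '' Γ) δ', ‖F w‖ ≤ C'' * Real.exp (-η * jb w) := by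
  obtain ⟨η, hη, δ', hδ', c, hc, D, hintegrand⟩ :=
    exists_integrand_le_mul_exp_neg_jb hχ (hψ.to_rightInverse hl) hf1 hε hδ0 hε' hf2
  refine ⟨η, hη, δ', hδ', D * ∫ z : EuclideanSpace ℝ (Fin (2 * d)), exp (-c * jb z), ?_⟩
  rintro w ⟨_, ⟨z₀, hz₀, rfl⟩, hw⟩
  calc ‖F w‖ ≤ ∫ z, exp (-ε' * ‖w - χ z‖) * ‖f z‖ := hF w
    _ ≤ D * exp (-η * jb w) * ∫ z : EuclideanSpace ℝ (Fin (2 * d)), exp (-c * jb z) :=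
        integral_le_mul_integral_exp_neg_jb hc (fun z ↦ by positivity) (hintegrand z₀ hz₀ w hw)
    _ = _ := by ring

theorem propagation_of_regularity (d : ℕ)
    (χ ψ : EuclideanSpace ℝ (Fin (2 * d)) → EuclideanSpace ℝ (Fin (2 * d)))
    (K K' : NNReal) (hχ : LipschitzWith K χ) (hψ : LipschitzWith K' ψ)
    (hl : Function.LeftInverse ψ χ) (hr : Function.RightInverse ψ χ)
    (hmp : MeasurePreserving χ volume volume)
    (Γ : Set (EuclideanSpace ℝ (Fin (2 * d))))
    (f F : EuclideanSpace ℝ (Fin (2 * d)) → ℂ)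
    (hf1 : ∀ lam : ℝ, 0 < lam → ∃ Clam : ℝ, ∀ z,
      ‖f z‖ ≤ Clam * Real.exp (lam * jb z))
    (ε δ Cf : ℝ) (hε : 0 < ε) (hδ0 : 0 < δ) (hδ1 : δ < 1)
    (hf2 : ∀ z ∈ nbhd Γ δ, ‖f z‖ ≤ Cf * Real.exp (-ε * jb z))
    (ε' : ℝ) (hε' : 0 < ε')
    (hF : ∀ w, ‖F w‖ ≤
      ∫ z, Real.exp (-ε' * ‖w - χ z‖) * ‖f z‖) :
    ∃ η > 0, ∃ δ' > 0, ∃ C'' : ℝ,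
      ∀ w ∈ nbhd (χ '' Γ) δ', ‖F w‖ ≤ C'' * Real.exp (-η * jb w) :=
  propagation_of_regularity_general d χ ψ K K' hχ hψ hl Γ f F hf1 ε δ Cf hε hδ0 hf2 ε' hε' hF
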